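/- The class P_{l,s} with the given degree bounds is closed under the solution of the averaging step in the following sense: if the homological equation L_{Z₂}χ + f = Z is solved with f ∈ P_{l,s}, where Z₂ = (ξ²+η²)/2, by choosing χ to cancel all monomials z^{m₂}(iz̄)^{m₃} of f with m₂ ≠ m₃ (divided by i(m₃−m₂)) and Z to collect the monomials with m₂ = m₃, then both χ and Z lie in P_{l,s}, and the coefficients of χ and Z are obtained from those of f without any small divisors (every divisor i(m₃−m₂) has modulus ≥ 1). -/

import Mathlib

noncomputable section

open Real

/-- `β(λ) = 1/√(2 - 2 cos λ)`. -/
def beta (lam : ℝ) : ℝ := 1 / Real.sqrt (2 - 2 * Real.cos lam)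

/-- The monomial `ρ^{m1} ξ^{m2} η^{m3} (cos λ)^{k1} (sin λ)^{k2} β(λ)^j`,
indexed by `(m1, m2, m3, k1, k2, j)`. -/
def mono (idx : ℕ × ℕ × ℕ × ℕ × ℕ × ℕ) (ρ ξ lam η : ℝ) : ℝ :=
  ρ ^ idx.1 * ξ ^ idx.2.1 * η ^ idx.2.2.1 * Real.cos lam ^ idx.2.2.2.1 *
    Real.sin lam ^ idx.2.2.2.2.1 * beta lam ^ idx.2.2.2.2.2

/-- Membership in the class `P_{l,s}`: a finite real linear combination of the monomials
`ρ^{m1} ξ^{m2} η^{m3} (cos λ)^{k1} (sin λ)^{k2} β(λ)^j` with `2 m1 + m2 + m3 = l`,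
`k1 + k2 ≤ l + 4 s - 3` and `j ≤ 2 l + 7 s - 6`, on the domain `cos λ ≠ 1`. -/
def inClassP (l s : ℕ) (g : ℝ → ℝ → ℝ → ℝ → ℝ) : Prop :=
  ∃ c : (ℕ × ℕ × ℕ × ℕ × ℕ × ℕ) →₀ ℝ,
    (∀ idx ∈ c.support,
      2 * idx.1 + idx.2.1 + idx.2.2.1 = l ∧
      idx.2.2.2.1 + idx.2.2.2.2.1 + 3 ≤ l + 4 * s ∧
      idx.2.2.2.2.2 + 6 ≤ 2 * l + 7 * s) ∧
    ∀ ρ ξ lam η : ℝ, Real.cos lam ≠ 1 →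
      g ρ ξ lam η = c.sum fun idx a => a * mono idx ρ ξ lam η

/-- partial derivative with respect to `ρ` -/
def pdRho (f : ℝ → ℝ → ℝ → ℝ → ℝ) (ρ ξ lam η : ℝ) : ℝ := deriv (fun t => f t ξ lam η) ρ
/-- partial derivative with respect to `ξ` -/
def pdXi (f : ℝ → ℝ → ℝ → ℝ → ℝ) (ρ ξ lam η : ℝ) : ℝ := deriv (fun t => f ρ t lam η) ξ
/-- partial derivative with respect to `λ` -/
def pdLam (f : ℝ → ℝ → ℝ → ℝ → ℝ) (ρ ξ lam η : ℝ) : ℝ := deriv (fun t => f ρ ξ t η) lam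
/-- partial derivative with respect to `η` -/
def pdEta (f : ℝ → ℝ → ℝ → ℝ → ℝ) (ρ ξ lam η : ℝ) : ℝ := deriv (fun t => f ρ ξ lam t) η

/-- Canonical Poisson bracket with conjugate pairs `(ρ,λ)` and `(ξ,η)`:
`{f,g} = f_λ g_ρ − f_ρ g_λ + f_η g_ξ − f_ξ g_η`. -/
def pbracket (f g : ℝ → ℝ → ℝ → ℝ → ℝ) : ℝ → ℝ → ℝ → ℝ → ℝ :=
  fun ρ ξ lam η =>
    pdLam f ρ ξ lam η * pdRho g ρ ξ lam η - pdRho f ρ ξ lam η * pdLam g ρ ξ lam η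
    + pdEta f ρ ξ lam η * pdXi g ρ ξ lam η - pdXi f ρ ξ lam η * pdEta g ρ ξ lam η

/-!
In the coordinates `z = ξ + iη`, `z̄ = ξ - iη` the Lie derivative `L_{Z₂} = η ∂_ξ - ξ ∂_η` is
diagonal: it multiplies `z^m z̄^n` by `i (n - m)`. Expanding each `ξ^a η^b` of `f` in these
coordinates, the monomials with `m ≠ n` are cancelled by dividing by `i (n - m)`, a nonzero
Gaussian integer, and the remaining ones are powers of `z z̄ = ξ² + η²`. Taking real parts gives
real polynomials homogeneous of the same degree `a + b`, so multiplying them by the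
`(ρ, λ)`-factor of the corresponding monomial of `f` respects all the degree bounds of `P_{l,s}`.
-/

open MvPolynomial Complex

theorem Derivation.map_pow_of_eq_mul {R A : Type*} [CommSemiring R] [CommSemiring A]
    [Algebra R A] (D : Derivation R A A) {a c : A} (h : D a = c * a) (n : ℕ) :
    D (a ^ n) = (n * c) * a ^ n := by
  induction n with
  | zero => simp
  | succ n ih => rw [pow_succ, D.leibniz, ih, h, smul_eq_mul, smul_eq_mul]; push_cast; ring

namespace MvPolynomial

theorem hasDerivAt_eval_update {𝕜 σ : Type*} [NontriviallyNormedField 𝕜] [DecidableEq σ]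
    (p : MvPolynomial σ 𝕜) (x : σ → 𝕜) (i : σ) :
    HasDerivAt (fun t => eval (Function.update x i t) p) (eval x (pderiv i p)) (x i) := by
  induction p using MvPolynomial.induction_on with
  | C a => simpa using hasDerivAt_const (x i) a
  | add p q hp hq => simpa using hp.fun_add hq
  | mul_X p j hp =>
    simp only [map_mul, eval_X, pderiv_mul, pderiv_X, map_add]
    rcases eq_or_ne j i with rfl | hj
    · simpa using hp.fun_mul (hasDerivAt_id' (x j))
    · simpa [hj] using hp.mul_const (x j)

theorem hasDerivAt_eval_vecCons_fst {𝕜 : Type*} [NontriviallyNormedField 𝕜]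
    (p : MvPolynomial (Fin 2) 𝕜) (x y : 𝕜) :
    HasDerivAt (fun t => eval ![t, y] p) (eval ![x, y] (pderiv 0 p)) x := by
  have h : ∀ t, Function.update ![x, y] 0 t = ![t, y] := fun t => by
    ext i; fin_cases i <;> simp
  simpa [h] using hasDerivAt_eval_update p ![x, y] 0

theorem hasDerivAt_eval_vecCons_snd {𝕜 : Type*} [NontriviallyNormedField 𝕜]
    (p : MvPolynomial (Fin 2) 𝕜) (x y : 𝕜) :
    HasDerivAt (fun t => eval ![x, t] p) (eval ![x, y] (pderiv 1 p)) y := by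
  have h : ∀ t, Function.update ![x, y] 1 t = ![x, t] := fun t => by
    ext i; fin_cases i <;> simp
  simpa [h] using hasDerivAt_eval_update p ![x, y] 1

theorem IsHomogeneous.sum_monomial_of_subset {σ R : Type*} [CommSemiring R]
    {p : MvPolynomial σ R} {n : ℕ} (hp : p.IsHomogeneous n) {t : Finset (σ →₀ ℕ)}
    (ht : t ⊆ p.support) (g : (σ →₀ ℕ) → R) :
    (∑ s ∈ t, monomial s (g s)).IsHomogeneous n :=
  IsHomogeneous.sum _ _ _ fun s hs => isHomogeneous_monomial _ <| by
    rw [Finsupp.degree_eq_weight_one]; exact hp (mem_support_iff.mp (ht hs))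

theorem IsHomogeneous.add_eq_of_mem_support {R : Type*} [CommSemiring R]
    {q : MvPolynomial (Fin 2) R} {n : ℕ} (hq : q.IsHomogeneous n) {t : Fin 2 →₀ ℕ}
    (ht : t ∈ q.support) : t 0 + t 1 = n := by
  have h : Finsupp.weight (fun _ => 1) t = n := hq (mem_support_iff.mp ht)
  rwa [← Finsupp.degree_eq_weight_one, Finsupp.degree_eq_sum, Fin.sum_univ_two] at h

variable {σ : Type*}

def rePart : MvPolynomial σ ℂ →ₗ[ℝ] MvPolynomial σ ℝ where
  toFun q := AddMonoidAlgebra.map reAddGroupHom q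
  map_add' := AddMonoidAlgebra.map_add _
  map_smul' r q := by ext; simp

@[simp]
theorem coeff_rePart (q : MvPolynomial σ ℂ) (s : σ →₀ ℕ) :
    coeff s (rePart q) = (coeff s q).re :=
  rfl

theorem rePart_monomial (s : σ →₀ ℕ) (c : ℂ) : rePart (monomial s c) = monomial s c.re := by
  classical
  ext t; rw [coeff_rePart, coeff_monomial, coeff_monomial]; split_ifs <;> simp

theorem rePart_map_ofReal (r : MvPolynomial σ ℝ) : rePart (map ofRealHom r) = r := by
  ext t; rw [coeff_rePart, coeff_map, ofRealHom_eq_coe, ofReal_re]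

theorem eval_rePart (x : σ → ℝ) (q : MvPolynomial σ ℂ) :
    eval x (rePart q) = (eval (fun i => (x i : ℂ)) q).re := by
  induction q using MvPolynomial.induction_on' with
  | monomial s c =>
    have hprod : (s.prod fun i e => (x i : ℂ) ^ e) = ((s.prod fun i e => x i ^ e : ℝ) : ℂ) := by
      simp [Finsupp.prod]
    rw [rePart_monomial, eval_monomial, eval_monomial, hprod, re_mul_ofReal]
  | add p q hp hq => simp [hp, hq]

theorem rePart_X_mul_pderiv [DecidableEq σ] (i j : σ) (q : MvPolynomial σ ℂ) :
    rePart (X j * pderiv i q) = X j * pderiv i (rePart q) := by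
  ext t
  rw [coeff_rePart, coeff_X_mul', coeff_X_mul', coeff_pderiv, coeff_pderiv, coeff_rePart]
  split_ifs <;> simp

theorem IsHomogeneous.rePart {q : MvPolynomial σ ℂ} {n : ℕ} (hq : q.IsHomogeneous n) :
    (MvPolynomial.rePart q).IsHomogeneous n := fun _ hs =>
  hq fun h => hs (by simp [h])

theorem C_I_mul_C_I : (C I * C I : MvPolynomial σ ℂ) = -1 := by
  rw [← C_mul, I_mul_I, C_neg, C_1]

end MvPolynomial

/-- The Lie derivative `L_{Z₂} = {Z₂, ·}` on polynomials in `(ξ, η) = (X 0, X 1)`. -/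
def rotationDerivation (R : Type*) [CommRing R] :
    Derivation R (MvPolynomial (Fin 2) R) (MvPolynomial (Fin 2) R) :=
  (X 1 : MvPolynomial (Fin 2) R) • pderiv (R := R) (σ := Fin 2) 0 -
    (X 0 : MvPolynomial (Fin 2) R) • pderiv (R := R) (σ := Fin 2) 1

theorem rotationDerivation_apply {R : Type*} [CommRing R] (q : MvPolynomial (Fin 2) R) :
    rotationDerivation R q = X 1 * pderiv 0 q - X 0 * pderiv 1 q := rfl

theorem rePart_rotationDerivation (q : MvPolynomial (Fin 2) ℂ) :
    rePart (rotationDerivation ℂ q) = rotationDerivation ℝ (rePart q) := by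
  simp only [rotationDerivation_apply, map_sub, rePart_X_mul_pderiv]

/-- The paper's `z = (ξ + iη)/√2` and `iz̄` are constant multiples of `zCoord` and `zbarCoord`,
so its monomials `z^{m₂} (iz̄)^{m₃}` are ours up to nonzero factors. -/
def zCoord : MvPolynomial (Fin 2) ℂ := X 0 + C I * X 1

def zbarCoord : MvPolynomial (Fin 2) ℂ := X 0 - C I * X 1

theorem rotationDerivation_zCoord : rotationDerivation ℂ zCoord = C (-I) * zCoord := by
  simp [rotationDerivation_apply, zCoord]
  linear_combination (X 1 : MvPolynomial (Fin 2) ℂ) * C_I_mul_C_I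

theorem rotationDerivation_zbarCoord : rotationDerivation ℂ zbarCoord = C I * zbarCoord := by
  simp [rotationDerivation_apply, zbarCoord]
  linear_combination (X 1 : MvPolynomial (Fin 2) ℂ) * C_I_mul_C_I

theorem zCoord_mul_zbarCoord : zCoord * zbarCoord = X 0 ^ 2 + X 1 ^ 2 := by
  simp only [zCoord, zbarCoord]
  linear_combination (-X 1 ^ 2 : MvPolynomial (Fin 2) ℂ) * C_I_mul_C_I

theorem rotationDerivation_zCoord_pow_mul (m n : ℕ) :
    rotationDerivation ℂ (zCoord ^ m * zbarCoord ^ n) =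
      C (I * (n - m)) * (zCoord ^ m * zbarCoord ^ n) := by
  rw [Derivation.leibniz, Derivation.map_pow_of_eq_mul _ rotationDerivation_zCoord,
    Derivation.map_pow_of_eq_mul _ rotationDerivation_zbarCoord, smul_eq_mul, smul_eq_mul]
  simp only [map_mul, map_sub, map_natCast, map_neg]
  ring

def ofZCoords : MvPolynomial (Fin 2) ℂ →ₐ[ℂ] MvPolynomial (Fin 2) ℂ :=
  aeval ![zCoord, zbarCoord]

theorem ofZCoords_monomial (s : Fin 2 →₀ ℕ) (c : ℂ) :
    ofZCoords (monomial s c) = C c * (zCoord ^ s 0 * zbarCoord ^ s 1) := by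
  rw [ofZCoords, aeval_monomial, Finsupp.prod_fintype _ _ (by simp), Fin.prod_univ_two]
  rfl

theorem rotationDerivation_ofZCoords_monomial (s : Fin 2 →₀ ℕ) (c : ℂ) :
    rotationDerivation ℂ (ofZCoords (monomial s c)) =
      C (I * (s 1 - s 0)) * ofZCoords (monomial s c) := by
  rw [ofZCoords_monomial, ← smul_eq_C_mul, Derivation.map_smul,
    rotationDerivation_zCoord_pow_mul]
  simp only [smul_eq_C_mul]; ring

theorem MvPolynomial.IsHomogeneous.ofZCoords {p : MvPolynomial (Fin 2) ℂ} {n : ℕ}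
    (hp : p.IsHomogeneous n) : (ofZCoords p).IsHomogeneous n := by
  have h : ∀ i, (![zCoord, zbarCoord] i).IsHomogeneous 1 := by
    intro i; fin_cases i
    · exact (isHomogeneous_X ℂ (0 : Fin 2)).add ((isHomogeneous_X ℂ 1).C_mul I)
    · exact (isHomogeneous_X ℂ (0 : Fin 2)).sub ((isHomogeneous_X ℂ 1).C_mul I)
  have := hp.aeval _ h
  rwa [one_mul] at this

def xiEtaInZCoords (a b : ℕ) : MvPolynomial (Fin 2) ℂ :=
  (C (1 / 2) * (X 0 + X 1)) ^ a * (C (-I / 2) * (X 0 - X 1)) ^ b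

theorem isHomogeneous_xiEtaInZCoords (a b : ℕ) :
    (xiEtaInZCoords a b).IsHomogeneous (a + b) := by
  have hξ := ((isHomogeneous_X ℂ (0 : Fin 2)).add (isHomogeneous_X ℂ 1)).C_mul (1 / 2)
  have hη := ((isHomogeneous_X ℂ (0 : Fin 2)).sub (isHomogeneous_X ℂ 1)).C_mul (-I / 2)
  have := (hξ.pow a).mul (hη.pow b)
  rw [one_mul, one_mul] at this
  unfold xiEtaInZCoords
  exact this

theorem ofZCoords_xiEtaInZCoords (a b : ℕ) :
    ofZCoords (xiEtaInZCoords a b) = X 0 ^ a * X 1 ^ b := by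
  have h2 : (C (1 / 2) * 2 : MvPolynomial (Fin 2) ℂ) = 1 := by
    rw [← map_ofNat C 2, ← C_mul]; norm_num
  have h2I : (C (-I / 2) * 2 * C I : MvPolynomial (Fin 2) ℂ) = 1 := by
    rw [← map_ofNat C 2, ← C_mul, ← C_mul]; ring_nf; simp
  have hξ : ofZCoords (C (1 / 2) * (X 0 + X 1)) = X 0 := by
    simp only [ofZCoords, map_mul, map_add, algHom_C, aeval_X, algebraMap_eq,
      Matrix.cons_val_zero, Matrix.cons_val_one, zCoord, zbarCoord]
    linear_combination (X 0 : MvPolynomial (Fin 2) ℂ) * h2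
  have hη : ofZCoords (C (-I / 2) * (X 0 - X 1)) = X 1 := by
    simp only [ofZCoords, map_mul, map_sub, algHom_C, aeval_X, algebraMap_eq,
      Matrix.cons_val_zero, Matrix.cons_val_one, zCoord, zbarCoord]
    linear_combination (X 1 : MvPolynomial (Fin 2) ℂ) * h2I
  rw [xiEtaInZCoords, map_mul, map_pow, map_pow, hξ, hη]

def resonantPart (p : MvPolynomial (Fin 2) ℂ) : MvPolynomial (Fin 2) ℂ :=
  ∑ s ∈ p.support with s 0 = s 1, monomial s (coeff s p)

def homologicalSolution (p : MvPolynomial (Fin 2) ℂ) : MvPolynomial (Fin 2) ℂ :=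
  ∑ s ∈ p.support with s 0 ≠ s 1, monomial s (coeff s p / (I * (s 0 - s 1)))

theorem rotationDerivation_homologicalSolution_add (p : MvPolynomial (Fin 2) ℂ) :
    rotationDerivation ℂ (ofZCoords (homologicalSolution p)) + ofZCoords p =
      ofZCoords (resonantPart p) := by
  have hsplit : ofZCoords p = ofZCoords (resonantPart p) +
      ∑ s ∈ p.support with s 0 ≠ s 1, ofZCoords (monomial s (coeff s p)) := by
    rw [resonantPart, ← map_sum, ← map_add, Finset.sum_filter_add_sum_filter_not, ← as_sum]
  rw [hsplit, add_left_comm, homologicalSolution, map_sum, map_sum, ← Finset.sum_add_distrib,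
    Finset.sum_eq_zero, add_zero]
  intro s hs
  have hne : (s 0 : ℂ) - s 1 ≠ 0 :=
    sub_ne_zero.2 (by exact_mod_cast (Finset.mem_filter.1 hs).2)
  have hcancel : I * (s 1 - s 0) * (coeff s p / (I * (s 0 - s 1))) + coeff s p = 0 := by
    field_simp; ring
  rw [rotationDerivation_ofZCoords_monomial, ofZCoords_monomial, ofZCoords_monomial, ← mul_assoc,
    ← C_mul, ← add_mul, ← C_add, hcancel, C_0, zero_mul]

theorem eval_ofZCoords_resonantPart (p : MvPolynomial (Fin 2) ℂ) (v : Fin 2 → ℂ) :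
    eval v (ofZCoords (resonantPart p)) =
      ∑ s ∈ p.support with s 0 = s 1, coeff s p * (v 0 ^ 2 + v 1 ^ 2) ^ s 0 := by
  simp only [resonantPart, map_sum]
  refine Finset.sum_congr rfl fun s hs => ?_
  rw [ofZCoords_monomial, ← (Finset.mem_filter.1 hs).2, ← mul_pow, zCoord_mul_zbarCoord]
  simp

def homologicalChi (a b : ℕ) : MvPolynomial (Fin 2) ℝ :=
  rePart (ofZCoords (homologicalSolution (xiEtaInZCoords a b)))

def homologicalZ (a b : ℕ) : MvPolynomial (Fin 2) ℝ :=
  rePart (ofZCoords (resonantPart (xiEtaInZCoords a b)))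

theorem rotationDerivation_homologicalChi_add (a b : ℕ) :
    rotationDerivation ℝ (homologicalChi a b) + X 0 ^ a * X 1 ^ b = homologicalZ a b := by
  have hX : (X 0 ^ a * X 1 ^ b : MvPolynomial (Fin 2) ℂ) = map ofRealHom (X 0 ^ a * X 1 ^ b) := by
    simp
  have h := congrArg rePart (rotationDerivation_homologicalSolution_add (xiEtaInZCoords a b))
  rwa [map_add, rePart_rotationDerivation, ofZCoords_xiEtaInZCoords, hX, rePart_map_ofReal] at h

theorem isHomogeneous_homologicalChi (a b : ℕ) : (homologicalChi a b).IsHomogeneous (a + b) :=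
  ((isHomogeneous_xiEtaInZCoords a b).sum_monomial_of_subset (Finset.filter_subset _ _)
    _).ofZCoords.rePart

theorem isHomogeneous_homologicalZ (a b : ℕ) : (homologicalZ a b).IsHomogeneous (a + b) :=
  ((isHomogeneous_xiEtaInZCoords a b).sum_monomial_of_subset (Finset.filter_subset _ _)
    _).ofZCoords.rePart

theorem exists_eval_homologicalZ_eq (a b : ℕ) :
    ∃ w : ℝ → ℝ, ∀ x y : ℝ, eval ![x, y] (homologicalZ a b) = w (x ^ 2 + y ^ 2) := by
  refine ⟨fun t => (∑ s ∈ (xiEtaInZCoords a b).support with s 0 = s 1,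
    coeff s (xiEtaInZCoords a b) * (t : ℂ) ^ s 0).re, fun x y => ?_⟩
  rw [homologicalZ, eval_rePart, eval_ofZCoords_resonantPart]
  push_cast
  simp
abbrev MonoIndex := ℕ × ℕ × ℕ × ℕ × ℕ × ℕ

def IsAdmissible (l s : ℕ) (idx : MonoIndex) : Prop :=
  2 * idx.1 + idx.2.1 + idx.2.2.1 = l ∧
    idx.2.2.2.1 + idx.2.2.2.2.1 + 3 ≤ l + 4 * s ∧ idx.2.2.2.2.2 + 6 ≤ 2 * l + 7 * s

def classP (l s : ℕ) : Submodule ℝ (ℝ → ℝ → ℝ → ℝ → ℝ) where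
  carrier := {g | inClassP l s g}
  add_mem' := by
    rintro g g' ⟨c, hc, hg⟩ ⟨c', hc', hg'⟩
    refine ⟨c + c', fun idx hidx => ?_, fun ρ ξ lam η hcos => ?_⟩
    · rcases Finset.mem_union.1 (Finsupp.support_add hidx) with h | h
      exacts [hc idx h, hc' idx h]
    · rw [Pi.add_apply, Pi.add_apply, Pi.add_apply, Pi.add_apply, hg _ _ _ _ hcos,
        hg' _ _ _ _ hcos, Finsupp.sum_add_index' (fun _ => zero_mul _) (fun _ _ _ => add_mul _ _ _)]
  zero_mem' := ⟨0, by simp, by simp⟩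
  smul_mem' := by
    rintro r g ⟨c, hc, hg⟩
    refine ⟨r • c, fun idx hidx => hc idx (Finsupp.support_smul hidx), fun ρ ξ lam η hcos => ?_⟩
    rw [Pi.smul_apply, Pi.smul_apply, Pi.smul_apply, Pi.smul_apply, hg _ _ _ _ hcos,
      Finsupp.sum_smul_index' (fun _ => zero_mul _), smul_eq_mul, Finsupp.mul_sum]
    simp only [smul_eq_mul, mul_assoc]

theorem mono_mem_classP {l s : ℕ} {idx : MonoIndex} (h : IsAdmissible l s idx) :
    (fun ρ ξ lam η => mono idx ρ ξ lam η) ∈ classP l s := by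
  refine ⟨Finsupp.single idx 1, fun i hi => ?_, fun ρ ξ lam η _ => ?_⟩
  · rwa [Finset.mem_singleton.1 (Finsupp.support_single_subset hi)]
  · rw [Finsupp.sum_single_index (zero_mul _), one_mul]

def monoRhoLam (idx : MonoIndex) (ρ lam : ℝ) : ℝ :=
  ρ ^ idx.1 * Real.cos lam ^ idx.2.2.2.1 * Real.sin lam ^ idx.2.2.2.2.1 * beta lam ^ idx.2.2.2.2.2

theorem mono_eq_monoRhoLam_mul (idx : MonoIndex) (ρ ξ lam η : ℝ) :
    mono idx ρ ξ lam η =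
      monoRhoLam idx ρ lam * eval ![ξ, η] (X 0 ^ idx.2.1 * X 1 ^ idx.2.2.1) := by
  simp [mono, monoRhoLam]; ring

def substXiEta (c : MonoIndex →₀ ℝ) (Q : ℕ → ℕ → MvPolynomial (Fin 2) ℝ) :
    ℝ → ℝ → ℝ → ℝ → ℝ :=
  fun ρ ξ lam η =>
    c.sum fun idx a => a * monoRhoLam idx ρ lam * eval ![ξ, η] (Q idx.2.1 idx.2.2.1)

theorem sum_mono_eq_substXiEta (c : MonoIndex →₀ ℝ) (ρ ξ lam η : ℝ) :
    (c.sum fun idx a => a * mono idx ρ ξ lam η) =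
      substXiEta c (fun a b => X 0 ^ a * X 1 ^ b) ρ ξ lam η := by
  simp only [substXiEta, mono_eq_monoRhoLam_mul, mul_assoc]

theorem substXiEta_add (c : MonoIndex →₀ ℝ) (Q Q' : ℕ → ℕ → MvPolynomial (Fin 2) ℝ)
    (ρ ξ lam η : ℝ) :
    substXiEta c (fun a b => Q a b + Q' a b) ρ ξ lam η =
      substXiEta c Q ρ ξ lam η + substXiEta c Q' ρ ξ lam η := by
  simp only [substXiEta, Finsupp.sum, map_add, mul_add, Finset.sum_add_distrib]

theorem substXiEta_mem_classP {l s : ℕ} {c : MonoIndex →₀ ℝ}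
    (hc : ∀ idx ∈ c.support, IsAdmissible l s idx)
    {Q : ℕ → ℕ → MvPolynomial (Fin 2) ℝ} (hQ : ∀ a b, (Q a b).IsHomogeneous (a + b)) :
    substXiEta c Q ∈ classP l s := by
  have h : substXiEta c Q = ∑ idx ∈ c.support, ∑ t ∈ (Q idx.2.1 idx.2.2.1).support,
      (c idx * coeff t (Q idx.2.1 idx.2.2.1)) •
        fun ρ ξ lam η => mono (idx.1, t 0, t 1, idx.2.2.2) ρ ξ lam η := by
    funext ρ ξ lam η
    simp only [substXiEta, Finsupp.sum, eval_eq', Fin.prod_univ_two, Finset.sum_apply,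
      Pi.smul_apply, smul_eq_mul, Finset.mul_sum]
    refine Finset.sum_congr rfl fun idx _ => Finset.sum_congr rfl fun t _ => ?_
    simp only [mono, monoRhoLam, Matrix.cons_val_zero, Matrix.cons_val_one]; ring
  rw [h]
  refine Submodule.sum_mem _ fun idx hidx => Submodule.sum_mem _ fun t ht =>
    Submodule.smul_mem _ _ (mono_mem_classP ?_)
  obtain ⟨hl, hk, hj⟩ := hc idx hidx
  refine ⟨?_, hk, hj⟩
  have := (hQ _ _).add_eq_of_mem_support ht
  simp only at this ⊢
  omega

theorem pdXi_substXiEta (c : MonoIndex →₀ ℝ) (Q : ℕ → ℕ → MvPolynomial (Fin 2) ℝ)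
    (ρ ξ lam η : ℝ) :
    pdXi (substXiEta c Q) ρ ξ lam η = substXiEta c (fun a b => pderiv 0 (Q a b)) ρ ξ lam η :=
  (HasDerivAt.fun_sum fun idx _ =>
    (hasDerivAt_eval_vecCons_fst (Q idx.2.1 idx.2.2.1) ξ η).const_mul
      (c idx * monoRhoLam idx ρ lam)).deriv

theorem pdEta_substXiEta (c : MonoIndex →₀ ℝ) (Q : ℕ → ℕ → MvPolynomial (Fin 2) ℝ)
    (ρ ξ lam η : ℝ) :
    pdEta (substXiEta c Q) ρ ξ lam η = substXiEta c (fun a b => pderiv 1 (Q a b)) ρ ξ lam η :=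
  (HasDerivAt.fun_sum fun idx _ =>
    (hasDerivAt_eval_vecCons_snd (Q idx.2.1 idx.2.2.1) ξ η).const_mul
      (c idx * monoRhoLam idx ρ lam)).deriv

theorem pbracket_halfNormSq (g : ℝ → ℝ → ℝ → ℝ → ℝ) (ρ ξ lam η : ℝ) :
    pbracket (fun _ ξ' _ η' => (ξ' ^ 2 + η' ^ 2) / 2) g ρ ξ lam η =
      η * pdXi g ρ ξ lam η - ξ * pdEta g ρ ξ lam η := by
  simp [pbracket, pdLam, pdRho, pdXi, pdEta]

theorem pbracket_halfNormSq_substXiEta (c : MonoIndex →₀ ℝ) (Q : ℕ → ℕ → MvPolynomial (Fin 2) ℝ)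
    (ρ ξ lam η : ℝ) :
    pbracket (fun _ ξ' _ η' => (ξ' ^ 2 + η' ^ 2) / 2) (substXiEta c Q) ρ ξ lam η =
      substXiEta c (fun a b => rotationDerivation ℝ (Q a b)) ρ ξ lam η := by
  rw [pbracket_halfNormSq, pdXi_substXiEta, pdEta_substXiEta]
  simp only [substXiEta, Finsupp.sum, Finset.mul_sum, ← Finset.sum_sub_distrib,
    rotationDerivation_apply, map_sub, map_mul, eval_X]
  refine Finset.sum_congr rfl fun idx _ => ?_
  simp; ring

theorem exists_substXiEta_eq_of_radial (c : MonoIndex →₀ ℝ) {Q : ℕ → ℕ → MvPolynomial (Fin 2) ℝ}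
    (hQ : ∀ a b, ∃ w : ℝ → ℝ, ∀ x y : ℝ, eval ![x, y] (Q a b) = w (x ^ 2 + y ^ 2)) :
    ∃ W : ℝ → ℝ → ℝ → ℝ, ∀ ρ ξ lam η : ℝ,
      substXiEta c Q ρ ξ lam η = W ρ ((ξ ^ 2 + η ^ 2) / 2) lam := by
  choose w hw using hQ
  refine ⟨fun ρ γ lam =>
    c.sum fun idx a => a * monoRhoLam idx ρ lam * w idx.2.1 idx.2.2.1 (2 * γ), fun ρ ξ lam η => ?_⟩
  simp only [substXiEta, hw, mul_div_cancel₀ _ (two_ne_zero' ℝ)]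

theorem one_le_norm_I_mul_natCast_sub {m n : ℕ} (h : m ≠ n) : 1 ≤ ‖I * ((n : ℂ) - m)‖ := by
  have hz : (n : ℤ) - m ≠ 0 := sub_ne_zero.2 (by exact_mod_cast h.symm)
  rw [norm_mul, norm_I, one_mul, show (n : ℂ) - m = ((n - m : ℤ) : ℂ) by push_cast; ring,
    norm_intCast]
  exact_mod_cast Int.one_le_abs hz

/-- Closure of `P_{l,s}` under the averaging step: with `Z₂ = (ξ²+η²)/2` and
`f ∈ P_{l,s}`, the homological equation `L_{Z₂}χ + f = Z` is solved by `χ, Z ∈ P_{l,s}`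
with `Z` depending on `(ξ,η)` only through `Γ = (ξ²+η²)/2` (`Z` collects the monomials
`z^{m₂}(iz̄)^{m₃}` with `m₂ = m₃`, `χ` cancels the others); no small divisors occur:
every divisor `i(m₃ − m₂)` with `m₂ ≠ m₃` has modulus `≥ 1`. -/
theorem class_closed_under_averaging (l s : ℕ) (f : ℝ → ℝ → ℝ → ℝ → ℝ)
    (hf : inClassP l s f) :
    (∃ χ Z : ℝ → ℝ → ℝ → ℝ → ℝ,
      inClassP l s χ ∧ inClassP l s Z ∧
      (∃ W : ℝ → ℝ → ℝ → ℝ, ∀ ρ ξ lam η : ℝ, Z ρ ξ lam η = W ρ ((ξ ^ 2 + η ^ 2) / 2) lam) ∧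
      ∀ ρ ξ lam η : ℝ, Real.cos lam ≠ 1 →
        pbracket (fun _ ξ' _ η' => (ξ' ^ 2 + η' ^ 2) / 2) χ ρ ξ lam η + f ρ ξ lam η
          = Z ρ ξ lam η) ∧
    (∀ m2 m3 : ℕ, m2 ≠ m3 →
      1 ≤ ‖Complex.I * ((m3 : ℂ) - (m2 : ℂ))‖) := by
  obtain ⟨c, hc, hfc⟩ := hf
  refine ⟨⟨substXiEta c homologicalChi, substXiEta c homologicalZ,
    substXiEta_mem_classP hc isHomogeneous_homologicalChi,
    substXiEta_mem_classP hc isHomogeneous_homologicalZ,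
    exists_substXiEta_eq_of_radial c exists_eval_homologicalZ_eq, fun ρ ξ lam η hcos => ?_⟩,
    fun _ _ => one_le_norm_I_mul_natCast_sub⟩
  rw [pbracket_halfNormSq_substXiEta, hfc ρ ξ lam η hcos, sum_mono_eq_substXiEta,
    ← substXiEta_add]
  simp only [rotationDerivation_homologicalChi_add]
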